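/- Transitivity of symplectic reduction: let (X, ω) be a symplectic vector space with co-isotropic subspaces W₁ ⊆ W₂. Then W₁/W₂^ω is a subspace of the reduced symplectic space W₂/W₂^ω with annihilator W₁^ω/W₂^ω, the natural map K : W₁/W₂^ω → W₁/W₁^ω induces a symplectic isomorphism K̃ : (W₁/W₂^ω)/(W₁^ω/W₂^ω) → W₁/W₁^ω, and for every linear subspace λ of X one has R_{W₁/W₂^ω}(R_{W₂}(λ)) = K̃^{-1}(R_{W₁}(λ)). -/
import Mathlib

universe u

/-- The annihilator `λ^ω = {y ∈ X : ω(x,y) = 0 for all x ∈ λ}` of a subspace of a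
complex vector space with a sesquilinear form `ω` (linear in the first,
conjugate-linear in the second variable). -/
noncomputable def ann {X : Type*} [AddCommGroup X] [Module ℂ X]
    (ω : X →ₗ[ℂ] X →ₗ⋆[ℂ] ℂ) (l : Submodule ℂ X) : Submodule ℂ X :=
  ⨅ x ∈ l, LinearMap.ker (ω x)

/-- Transitivity of symplectic reduction for co-isotropic `W₁ ⊆ W₂`:
`W₂^ω ⊆ W₁^ω`, the annihilator of `W₁/W₂^ω` in the reduced space `W₂/W₂^ω` is
`W₁^ω/W₂^ω` (upstairs: `W₁^ω ∩ W₂ = W₁^ω`), and for every subspace `λ` the iterated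
reduction `R_{W₁/W₂^ω}(R_{W₂}(λ))` corresponds under the natural symplectic
isomorphism `K̃ : (W₁/W₂^ω)/(W₁^ω/W₂^ω) ≅ W₁/W₁^ω` to `R_{W₁}(λ)`; upstairs this is
the identity `((λ∩W₂ + W₂^ω) ∩ W₁) + W₁^ω = λ∩W₁ + W₁^ω`. -/
theorem reduction_transitive {X : Type*} [AddCommGroup X] [Module ℂ X]
    (ω : X →ₗ[ℂ] X →ₗ⋆[ℂ] ℂ)
    (hskew : ∀ x y, ω y x = - (starRingEnd ℂ) (ω x y))
    (hnd : ∀ x, (∀ y, ω x y = 0) → x = 0)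
    (W₁ W₂ : Submodule ℂ X)
    (h1 : ann ω W₁ ≤ W₁) (h2 : ann ω W₂ ≤ W₂) (h12 : W₁ ≤ W₂) :
    ann ω W₂ ≤ ann ω W₁ ∧
    ann ω W₁ ⊓ W₂ = ann ω W₁ ∧
    ∀ l : Submodule ℂ X,
      ((l ⊓ W₂ ⊔ ann ω W₂) ⊓ W₁) ⊔ ann ω W₁ = (l ⊓ W₁) ⊔ ann ω W₁ := by
  have hmono : ann ω W₂ ≤ ann ω W₁ := by
    intro x hx
    simp only [ann, Submodule.mem_iInf, LinearMap.mem_ker] at hx ⊢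
    exact fun y hy => hx y (h12 hy)
  refine ⟨hmono, inf_eq_left.mpr (h1.trans h12), fun l => ?_⟩
  apply le_antisymm
  · rintro x hx
    rcases Submodule.mem_sup.mp hx with ⟨y, hy, b, hb, rfl⟩
    obtain ⟨hy1, hy2⟩ := hy
    rcases Submodule.mem_sup.mp hy1 with ⟨a, ha, c, hc, rfl⟩
    have hc1 : c ∈ ann ω W₁ := hmono hc
    have ha1 : a ∈ W₁ := by
      have h : a = (a + c) - c := by abel
      rw [h]; exact Submodule.sub_mem _ hy2 (h1 hc1)
    exact Submodule.add_mem _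
      (Submodule.add_mem _ (Submodule.mem_sup_left ⟨ha.1, ha1⟩)
        (Submodule.mem_sup_right hc1))
      (Submodule.mem_sup_right hb)
  · exact sup_le_sup_right
      (le_inf (le_sup_of_le_left (inf_le_inf_left l h12)) inf_le_right) _
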